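/- Functions of bounded variation have bounded fractional variation (example in Section 7). Let d ≥ 1 and α ∈ (0,1). There exists a constant C ≥ 0, depending only on d and α, such that for every f ∈ L¹(ℝ^d) vanishing almost everywhere outside [0,1]^d one has Ṽ^α(f|_{[0,1]^d}) ≤ C · V f, where V f ∈ [0,∞] is the supremum of ∫_{ℝ^d} f div v over all continuously differentiable compactly supported vector fields v : ℝ^d → ℝ^d with |v(x)| ≤ 1 for all x ∈ ℝ^d. -/

import Mathlib

open MeasureTheory Filter
open scoped BigOperators ENNReal Classical

noncomputable section

/-- Points of `ℝ^d` with the Euclidean norm. -/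
abbrev Euc (d : ℕ) := EuclideanSpace ℝ (Fin d)

/-- The closed dyadic cube of generation `n` with lower corner `2^{-n} k` inside `[0,1]^d`. -/
def dyCube (d n : ℕ) (k : Fin d → ℕ) : Set (Euc d) :=
  {x | ∀ i, (k i : ℝ) / 2 ^ n ≤ x i ∧ x i ≤ ((k i : ℝ) + 1) / 2 ^ n}

/-- The unit cube `[0,1]^d`. -/
def uCube (d : ℕ) : Set (Euc d) := dyCube d 0 (fun _ => 0)

/-- Volume `2^{-nd}` of a dyadic cube of generation `n`. -/
def dyVol (d n : ℕ) : ℝ := ((2 : ℝ) ^ (n * d))⁻¹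

/-- A real valued function on the dyadic cubes of `[0,1]^d` (encoded by generation and
lower-corner index) is additive if its value on each cube is the sum of its values
on the `2^d` children. -/
def IsAdditiveDy (d : ℕ) (ω : ∀ _ : ℕ, (Fin d → ℕ) → ℝ) : Prop :=
  ∀ n (k : Fin d → ℕ), (∀ i, k i < 2 ^ n) →
    ω n k = ∑ j : Fin d → Fin 2, ω (n + 1) (fun i => 2 * k i + (j i : ℕ))

/-- The Haar function `g_{n,k,ε}` on `[0,1]^d`. -/
def haarF (d n : ℕ) (k : Fin d → ℕ) (ε : Fin d → Bool) (x : Euc d) : ℝ :=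
  if ∀ i, (k i : ℝ) / 2 ^ n ≤ x i ∧ x i < ((k i : ℝ) + 1) / 2 ^ n then
    (2 : ℝ) ^ (((n * d : ℕ) : ℝ) / 2) *
      ∏ i, (if ε i then (if (2 : ℝ) ^ n * x i - (k i : ℝ) < 1 / 2 then (1 : ℝ) else -1) else 1)
  else 0

/-- The Faber–Schauder coefficient `a_{n,k,ε}(ω)` of an additive function on dyadic cubes. -/
def fsCoeff (d : ℕ) (ω : ∀ _ : ℕ, (Fin d → ℕ) → ℝ) (n : ℕ) (k : Fin d → ℕ)
    (ε : Fin d → Bool) : ℝ :=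
  (2 : ℝ) ^ (((n * d : ℕ) : ℝ) / 2) *
    ∑ j : Fin d → Fin 2,
      (∏ i, (if ε i then (if j i = 0 then (1 : ℝ) else -1) else 1)) *
        ω (n + 1) (fun i => 2 * k i + (j i : ℕ))


/-- The pointwise divergence `Σ_i ∂v_i/∂x_i` of a vector field on `ℝ^d`. -/
def divg (d : ℕ) (v : Euc d → Euc d) (x : Euc d) : ℝ :=
  ∑ i, fderiv ℝ v x (EuclideanSpace.single i (1 : ℝ)) i

/-- The variation `Ṽ^α f ∈ [0,∞]`: supremum of `∫_{[0,1]^d} f div v` over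
`C¹`-on-a-neighborhood vector fields with `Lip^α(v) ≤ 1`. -/
def tildeV (d : ℕ) (α : ℝ) (f : Euc d → ℝ) : ℝ≥0∞ :=
  ⨆ (v : Euc d → Euc d)
    (_ : ∃ U : Set (Euc d), IsOpen U ∧ uCube d ⊆ U ∧ ContDiffOn ℝ 1 v U)
    (_ : ∀ x ∈ uCube d, ∀ y ∈ uCube d, ‖v x - v y‖ ≤ ‖x - y‖ ^ α),
    ENNReal.ofReal (∫ x in uCube d, f x * divg d v x)

/-- The total variation `V f ∈ [0,∞]` of `f ∈ L¹(ℝ^d)`: supremum of `∫_{ℝ^d} f div v`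
over `C¹` compactly supported vector fields `v` with `|v| ≤ 1` everywhere. -/
def totalV (d : ℕ) (f : Euc d → ℝ) : ℝ≥0∞ :=
  ⨆ (v : Euc d → Euc d) (_ : ContDiff ℝ 1 v) (_ : HasCompactSupport v)
    (_ : ∀ x, ‖v x‖ ≤ 1),
    ENNReal.ofReal (∫ x, f x * divg d v x)

-- auxiliary lemmas

lemma uCube_eq (d : ℕ) : uCube d = {x : Euc d | ∀ i, 0 ≤ x i ∧ x i ≤ 1} := by
  ext x; simp [uCube, dyCube]

lemma isClosed_uCube (d : ℕ) : IsClosed (uCube d) := by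
  have : uCube d = ⋂ i, (EuclideanSpace.proj (𝕜 := ℝ) i) ⁻¹' Set.Icc (0:ℝ) 1 := by
    rw [uCube_eq]; ext x; simp [Set.mem_iInter]
  rw [this]
  exact isClosed_iInter fun i => (isClosed_Icc).preimage (EuclideanSpace.proj i).continuous

lemma norm_le_of_mem_uCube {d : ℕ} {x : Euc d} (hx : x ∈ uCube d) : ‖x‖ ≤ Real.sqrt d := by
  rw [uCube_eq] at hx
  rw [EuclideanSpace.norm_eq]
  apply Real.sqrt_le_sqrt
  calc ∑ i, ‖x i‖ ^ 2 ≤ ∑ _i : Fin d, 1 := by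
        refine Finset.sum_le_sum fun i _ => ?_
        have h := hx i
        have : ‖x i‖ ≤ 1 := by
          rw [Real.norm_eq_abs, abs_le]; exact ⟨by linarith [h.1], h.2⟩
        calc ‖x i‖ ^ 2 ≤ 1 ^ 2 := by
              exact pow_le_pow_left₀ (norm_nonneg _) this 2
          _ = 1 := one_pow 2
    _ = (d : ℝ) := by simp

lemma isCompact_uCube (d : ℕ) : IsCompact (uCube d) := by
  refine Metric.isCompact_of_isClosed_isBounded (isClosed_uCube d) ?_
  refine (Metric.isBounded_closedBall (x := (0 : Euc d)) (r := Real.sqrt d)).subset ?_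
  intro x hx
  simpa [Metric.mem_closedBall] using norm_le_of_mem_uCube hx

lemma smooth_cutoff (d : ℕ) (V K : Set (Euc d)) (hV : IsOpen V) (hK : IsCompact K)
    (hKV : Disjoint Vᶜ K) :
    ∃ χ : Euc d → ℝ, ContDiff ℝ 1 χ ∧ Set.EqOn χ 0 Vᶜ ∧ Set.EqOn χ 1 K ∧
      ∀ x, χ x ∈ Set.Icc (0:ℝ) 1 := by
  obtain ⟨χ, h0, h1, h01⟩ := exists_contMDiffMap_zero_one_of_isClosed (n := ⊤) (modelWithCornersSelf ℝ (Euc d))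
    hV.isClosed_compl hK.isClosed hKV
  exact ⟨χ, (contMDiff_iff_contDiff.mp χ.contMDiff).of_le (by exact_mod_cast le_top), h0, h1, h01⟩


/-- **Functions of bounded variation have bounded fractional variation**
(example in Section 7). -/
theorem bv_bounded_fracVar (d : ℕ) (hd : 0 < d) (α : ℝ) (hα0 : 0 < α) (hα1 : α < 1) :
    ∃ C : ℝ, 0 ≤ C ∧ ∀ f : Euc d → ℝ, Integrable f →
      (∀ᵐ x, x ∉ uCube d → f x = 0) →
      tildeV d α f ≤ ENNReal.ofReal C * totalV d f := by
  set C : ℝ := Real.sqrt d ^ α + 1 with hCdef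
  have hCpos : 0 < C := by positivity
  refine ⟨C, hCpos.le, fun f hf hf0 => ?_⟩
  rw [tildeV]
  refine iSup_le fun v => iSup_le fun hUex => iSup_le fun hHol => ?_
  obtain ⟨U, hUopen, hUsub, hv⟩ := hUex
  -- 0 is in the cube
  have h0cube : (0 : Euc d) ∈ uCube d := by rw [uCube_eq]; intro i; norm_num
  -- bound on v - v 0 on the cube
  have hvb : ∀ x ∈ uCube d, ‖v x - v 0‖ < C := by
    intro x hx
    have h1 : ‖v x - v 0‖ ≤ ‖x - 0‖ ^ α := hHol x hx 0 h0cube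
    have h2 : ‖x - 0‖ ^ α ≤ Real.sqrt d ^ α := by
      rw [sub_zero]
      exact Real.rpow_le_rpow (norm_nonneg _) (norm_le_of_mem_uCube hx) hα0.le
    have : (0:ℝ) < 1 := one_pos
    calc ‖v x - v 0‖ ≤ Real.sqrt d ^ α := le_trans h1 h2
      _ < C := by rw [hCdef]; linarith
  -- the open set V
  set g : Euc d → ℝ := fun x => ‖v x - v 0‖ with hgdef
  have hgc : ContinuousOn g (U ∩ Metric.ball (0 : Euc d) (Real.sqrt d + 1)) :=
    (((hv.continuousOn).sub continuousOn_const).norm).mono Set.inter_subset_left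
  set V : Set (Euc d) := (U ∩ Metric.ball (0 : Euc d) (Real.sqrt d + 1)) ∩ g ⁻¹' (Set.Iio C)
    with hVdef
  have hVopen : IsOpen V :=
    hgc.isOpen_inter_preimage (hUopen.inter Metric.isOpen_ball) isOpen_Iio
  have hVU : V ⊆ U := fun x hx => hx.1.1
  have hcubeV : uCube d ⊆ V := by
    intro x hx
    refine ⟨⟨hUsub hx, ?_⟩, hvb x hx⟩
    have := norm_le_of_mem_uCube hx
    simp only [Metric.mem_ball, dist_zero_right]
    linarith
  have hVnorm : ∀ x ∈ V, ‖v x - v 0‖ < C := fun x hx => hx.2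
  -- compact sandwich uCube ⊆ int K ⊆ K ⊆ int L ⊆ L ⊆ V
  obtain ⟨K, hKcomp, hKint, hKV⟩ := exists_compact_between (isCompact_uCube d) hVopen hcubeV
  obtain ⟨L, hLcomp, hLint, hLV⟩ := exists_compact_between hKcomp hVopen hKV
  -- cutoff
  obtain ⟨χ, hχ1, hχzero, hχone, hχ01⟩ := smooth_cutoff d (interior L) K isOpen_interior
    hKcomp (disjoint_compl_left.mono_right hLint)
  have hχsupp : Function.support χ ⊆ interior L := by
    intro x hx
    by_contra hxL
    exact hx (hχzero hxL)
  have hχts : tsupport χ ⊆ L :=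
    (closure_mono hχsupp).trans (closure_minimal interior_subset hLcomp.isClosed)
  -- the vector field w
  set w : Euc d → Euc d := fun x => χ x • (v x - v 0) with hwdef
  have hw1 : ContDiff ℝ 1 w := by
    rw [contDiff_iff_contDiffAt]
    intro x
    by_cases hx : x ∈ U
    · exact (hχ1.contDiffAt).smul
        (((hv.contDiffAt (hUopen.mem_nhds hx)).sub contDiffAt_const))
    · have hxL : x ∈ Lᶜ := fun hxl => hx (hVU (hLV hxl))
      have hev : w =ᶠ[nhds x] (fun _ => (0 : Euc d)) := by
        refine eventually_of_mem (hLcomp.isClosed.isOpen_compl.mem_nhds hxL) fun y hy => ?_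
        have : χ y = 0 := image_eq_zero_of_notMem_tsupport (fun ht => hy (hχts ht))
        simp [hwdef, this]
      exact (contDiffAt_const (c := (0 : Euc d))).congr_of_eventuallyEq hev
  have hwsupp : HasCompactSupport w := by
    refine IsCompact.of_isClosed_subset hLcomp (isClosed_tsupport w) ?_
    have hsub : Function.support w ⊆ interior L := by
      intro x hx
      refine hχsupp ?_
      rw [Function.mem_support] at hx ⊢
      intro h0
      exact hx (by simp [hwdef, h0])
    exact (closure_mono hsub).trans (closure_minimal interior_subset hLcomp.isClosed)
  have hwnorm : ∀ x, ‖w x‖ ≤ C := by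
    intro x
    by_cases hx : χ x = 0
    · simp [hwdef, hx, hCpos.le]
    · have hxV : x ∈ V := hLV (interior_subset (hχsupp hx))
      have h1 : ‖w x‖ = |χ x| * ‖v x - v 0‖ := by
        rw [hwdef]; simp [norm_smul]
      have h2 : |χ x| ≤ 1 := by
        have := hχ01 x
        rw [abs_le]; exact ⟨by linarith [this.1], this.2⟩
      calc ‖w x‖ = |χ x| * ‖v x - v 0‖ := h1
        _ ≤ 1 * C := by
            exact mul_le_mul h2 (hVnorm x hxV).le (norm_nonneg _) zero_le_one
        _ = C := one_mul C
  -- divergence agreement on the cube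
  have hdivwv : ∀ x ∈ uCube d, divg d w x = divg d v x := by
    intro x hx
    have hxK : x ∈ interior K := hKint hx
    have hev : w =ᶠ[nhds x] (fun y => v y - v 0) := by
      refine eventually_of_mem (isOpen_interior.mem_nhds hxK) fun y hy => ?_
      have : χ y = 1 := hχone (interior_subset hy)
      simp [hwdef, this]
    have h1 : fderiv ℝ w x = fderiv ℝ (fun y => v y - v 0) x := hev.fderiv_eq
    have h2 : fderiv ℝ (fun y => v y - v 0) x = fderiv ℝ v x := fderiv_sub_const _
    rw [divg, divg, h1, h2]
  -- the normalized field
  set w' : Euc d → Euc d := fun x => C⁻¹ • w x with hw'def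
  have hw'1 : ContDiff ℝ 1 w' := hw1.const_smul C⁻¹
  have hw'supp : HasCompactSupport w' := by
    refine IsCompact.of_isClosed_subset hwsupp (isClosed_tsupport w') (closure_mono ?_)
    intro x hx
    rw [Function.mem_support] at hx ⊢
    intro h0
    exact hx (by simp [hw'def, h0])
  have hw'norm : ∀ x, ‖w' x‖ ≤ 1 := by
    intro x
    rw [hw'def]
    simp only [norm_smul, norm_inv, Real.norm_eq_abs, abs_of_pos hCpos]
    rw [inv_mul_le_iff₀ hCpos, mul_one]
    exact hwnorm x
  -- divergence scaling
  have hdivscale : ∀ x, divg d w x = C * divg d w' x := by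
    intro x
    have hwd : ∀ y, w y = C • w' y := by
      intro y
      rw [hw'def]
      simp only [smul_smul]
      rw [mul_inv_cancel₀ hCpos.ne', one_smul]
    have hdiff : DifferentiableAt ℝ w' x := (hw'1.differentiable one_ne_zero).differentiableAt
    have h1 : fderiv ℝ w x = C • fderiv ℝ w' x := by
      have : w = fun y => C • w' y := funext hwd
      rw [this, fderiv_fun_const_smul hdiff]
    rw [divg, divg, h1, Finset.mul_sum]
    exact Finset.sum_congr rfl fun i _ => by simp
  -- measurability
  have hmeas : MeasurableSet (uCube d) := (isClosed_uCube d).measurableSet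
  -- integral manipulations
  have step1 : ∫ x in uCube d, f x * divg d v x = ∫ x in uCube d, f x * divg d w x := by
    refine setIntegral_congr_fun hmeas fun x hx => ?_
    rw [hdivwv x hx]
  have step2 : ∫ x in uCube d, f x * divg d w x = ∫ x, f x * divg d w x := by
    rw [← integral_indicator hmeas]
    refine integral_congr_ae ?_
    filter_upwards [hf0] with x hx
    by_cases hxc : x ∈ uCube d
    · rw [Set.indicator_of_mem hxc]
    · rw [Set.indicator_of_notMem hxc, hx hxc, zero_mul]
  have step3 : ∫ x, f x * divg d w x = C * ∫ x, f x * divg d w' x := by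
    rw [← smul_eq_mul, ← integral_smul]
    refine integral_congr_ae (Eventually.of_forall fun x => ?_)
    simp only [smul_eq_mul]
    rw [hdivscale x]; ring
  have hle : ENNReal.ofReal (∫ x, f x * divg d w' x) ≤ totalV d f := by
    rw [totalV]
    exact le_iSup_of_le w' (le_iSup_of_le hw'1 (le_iSup_of_le hw'supp (le_iSup_of_le hw'norm
      le_rfl)))
  calc ENNReal.ofReal (∫ x in uCube d, f x * divg d v x)
      = ENNReal.ofReal (C * ∫ x, f x * divg d w' x) := by rw [step1, step2, step3]
    _ = ENNReal.ofReal C * ENNReal.ofReal (∫ x, f x * divg d w' x) :=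
        ENNReal.ofReal_mul hCpos.le
    _ ≤ ENNReal.ofReal C * totalV d f := mul_le_mul_right hle _


end
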